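/- arXiv:2407.07643 — 5 statements merged into one kernel-verified Lean document; each statement's English description precedes it below -/
import Mathlib

section
/- With the notation and hypotheses of the Basic equivalence Lemma (two distinct points of Y^m × X_{n−m} having the same projection to X_n, with associated index k and points ξ₀, ξ₀' ∈ X₀), the common image satisfies π_{m,n−m}(y₁,…,y_m,ξ) ∈ φ_{n,k}(X_k); in fact π_{m,n−m}(y₁,…,y_m,ξ) = φ_{n,k}(π_{k,0}(y₁,…,y_k,ξ₀)). -/
set_option linter.unusedSectionVars false
set_option linter.unusedVariables false

variable {Y : Type}

/-- Iterated embedding φ_{n,m} : X m → X n for m ≤ n. -/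
def phiTo (X : ℕ → Type) (φs : ∀ n, X n → X (n + 1)) {m n : ℕ} (h : m ≤ n) (x : X m) : X n :=
  Nat.leRecOn h (fun {k} x => φs k x) x

/-- Iterated projection π_{m,q} : Yᵐ × X q → X (q+m), the head of the word acting outermost. -/
def piFin (X : ℕ → Type) (πo : ∀ n, Y → X n → X (n + 1)) :
    ∀ (m q : ℕ), (Fin m → Y) → X q → X (q + m)
  | 0, _, _, x => x
  | m + 1, q, y, x => πo (q + m) (y 0) (piFin X πo m q (fun i => y i.succ) x)

/-- Iterated projection π_{m,0} : Yᵐ × X 0 → X m. -/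
def piFin0 (X : ℕ → Type) (πo : ∀ n, Y → X n → X (n + 1)) :
    ∀ (m : ℕ), (Fin m → Y) → X 0 → X m
  | 0, _, x => x
  | m + 1, y, x => πo m (y 0) (piFin0 X πo m (fun i => y i.succ) x)

/-- The set Γ_n(x_n) ⊂ Y^ℕ : all infinite addresses y such that for every p ≥ n the point
φ_{p,n}(x_n) lies in the cell C(y₁,…,y_p) = π_{p,0}({(y₁,…,y_p)} × X 0). -/
def Gamma (X : ℕ → Type) (φs : ∀ n, X n → X (n + 1)) (πo : ∀ n, Y → X n → X (n + 1))
    (n : ℕ) (xn : X n) : Set (ℕ → Y) :=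
  { y | ∀ p, ∀ h : n ≤ p, ∃ x0 : X 0, phiTo X φs h xn = piFin0 X πo p (fun i : Fin p => y i.1) x0 }

/-- The relation R on Y^ℕ: related iff equal or both in some Γ_n(x_n). -/
def simRel (X : ℕ → Type) (φs : ∀ n, X n → X (n + 1)) (πo : ∀ n, Y → X n → X (n + 1)) :
    (ℕ → Y) → (ℕ → Y) → Prop :=
  fun a b => a = b ∨ ∃ n, ∃ xn : X n, a ∈ Gamma X φs πo n xn ∧ b ∈ Gamma X φs πo n xn

variable {X : ℕ → Type}
  [TopologicalSpace Y] [CompactSpace Y] [T2Space Y]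
  [∀ n, TopologicalSpace (X n)] [∀ n, CompactSpace (X n)] [∀ n, T2Space (X n)]

/-! Cut the word `y` after its first `k` letters. By hypothesis the tail projects to
`φ_{·,0}(x0)`, and the commutation `π ∘ (id × φ) = φ ∘ π` carries `φ` out through each of the
remaining `k` head letters, leaving `φ_{n,k}(π_{k,0}(y₁,…,y_k, x0))`. -/

section

variable {Y : Type} {X : ℕ → Type} (φs : ∀ n, X n → X (n + 1)) (πo : ∀ n, Y → X n → X (n + 1))

theorem πo_phiTo
    (hcomm : ∀ (n : ℕ) (y : Y) (x : X n), πo (n + 1) y (φs n x) = φs (n + 1) (πo n y x))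
    {c n : ℕ} (h : c ≤ n) (y : Y) (x : X c) :
    πo n y (phiTo X φs h x) = phiTo X φs (Nat.succ_le_succ h) (πo c y x) := by
  induction n, h using Nat.le_induction with
  | base => simp only [phiTo, Nat.leRecOn_self]
  | succ n h ih =>
    simp only [phiTo, Nat.leRecOn_succ h, Nat.leRecOn_succ (Nat.succ_le_succ h)] at ih ⊢
    rw [hcomm, ih]

theorem piFin_eq_phiTo_piFin0
    (hcomm : ∀ (n : ℕ) (y : Y) (x : X n), πo (n + 1) y (φs n x) = φs (n + 1) (πo n y x))
    {j k m q : ℕ} (hm : j + k = m) (y : Fin m → Y) (ξ : X q) (x0 : X 0)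
    (h : piFin X πo j q (fun i => y ⟨k + i.1, by omega⟩) ξ = phiTo X φs (Nat.zero_le _) x0) :
    piFin X πo m q y ξ
      = phiTo X φs (by omega : k ≤ q + m) (piFin0 X πo k (fun i => y ⟨i.1, by omega⟩) x0) := by
  subst hm
  induction k with
  | zero =>
    exact .trans (congrArg (piFin X πo j q · ξ)
      (funext fun i => congrArg y (Fin.ext (Nat.zero_add i).symm))) h
  | succ k ih =>
    have htail : piFin X πo j q (fun i => y (Fin.succ (⟨k + i.1, by omega⟩ : Fin (j + k)))) ξ
        = phiTo X φs (Nat.zero_le _) x0 := by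
      convert h using 4 with i
      exact Fin.ext (Nat.add_right_comm k i 1)
    show πo (q + (j + k)) (y 0) (piFin X πo (j + k) q (fun i => y i.succ) ξ) = _
    rw [ih (fun i => y i.succ) htail, πo_phiTo φs πo hcomm]
    rfl

end

theorem statement_2
    (φs : ∀ n, X n → X (n + 1)) (πo : ∀ n, Y → X n → X (n + 1))
    (hcomm : ∀ (n : ℕ) (y : Y) (x : X n), πo (n + 1) y (φs n x) = φs (n + 1) (πo n y x))
    (m q k : ℕ) (hk2 : k ≤ m) (y : Fin m → Y) (ξ : X q)
    (x0 : X 0)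
    (h2 : piFin X πo (m - k) q (fun i => y ⟨k + i.1, by have := i.2; omega⟩) ξ
        = phiTo X φs (Nat.zero_le (q + (m - k))) x0) :
    piFin X πo m q y ξ
      = phiTo X φs (show k ≤ q + m by omega)
          (piFin0 X πo k (fun i : Fin k => y ⟨i.1, by have := i.2; omega⟩) x0) :=
  piFin_eq_phiTo_piFin0 φs πo hcomm (Nat.sub_add_cancel hk2) y ξ x0 h2
end

section
/- If (y, ξ) ∈ Y × X_n satisfies π_{1,n}(y, ξ) ∈ φ_{n+1,n}(X_n), then ξ ∈ φ_{n,n−1}(X_{n−1}). -/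
set_option linter.unusedSectionVars false
set_option linter.unusedVariables false

variable {Y : Type}

variable {X : ℕ → Type}
  [TopologicalSpace Y] [CompactSpace Y] [T2Space Y]
  [∀ n, TopologicalSpace (X n)] [∀ n, CompactSpace (X n)] [∀ n, T2Space (X n)]

theorem phiTo_succ {X : ℕ → Type} (φs : ∀ n, X n → X (n + 1)) {m n : ℕ} (h : m ≤ n)
    (h' : m ≤ n + 1) (x : X m) : phiTo X φs h' x = φs n (phiTo X φs h x) :=
  Nat.leRecOn_succ h x

theorem statement_6_general
    (φs : ∀ n, X n → X (n + 1)) (πo : ∀ n, Y → X n → X (n + 1))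
    (hπs : ∀ n, Function.Surjective fun p : Y × X n => πo n p.1 p.2)
    (hcomm : ∀ (n : ℕ) (y : Y) (x : X n), πo (n + 1) y (φs n x) = φs (n + 1) (πo n y x))
    (hquot : ∀ (n : ℕ) (y y' : Y) (ξ ξ' : X n), πo n y ξ = πo n y' ξ' → (y, ξ) ≠ (y', ξ') →
      ∃ x0 x0' : X 0, ξ = phiTo X φs (Nat.zero_le n) x0 ∧ ξ' = phiTo X φs (Nat.zero_le n) x0' ∧
        πo 0 y x0 = πo 0 y' x0')
    (m : ℕ) (y : Y) (ξ : X (m + 1))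
    (h : ∃ z : X (m + 1), πo (m + 1) y ξ = φs (m + 1) z) :
    ∃ w : X m, ξ = φs m w := by
  obtain ⟨z, hz⟩ := h
  obtain ⟨⟨y', ξ'⟩, rfl⟩ := hπs m z
  -- Writing z = π(y', ξ'), both (y, ξ) and (y', φ ξ') are preimages of the same point of X (m + 2).
  rw [← hcomm] at hz
  by_cases heq : (y, ξ) = (y', φs m ξ')
  · exact ⟨ξ', (Prod.ext_iff.1 heq).2⟩
  · obtain ⟨x0, -, rfl, -⟩ := hquot (m + 1) y y' ξ (φs m ξ') hz heq
    exact ⟨phiTo X φs (Nat.zero_le m) x0, phiTo_succ φs (Nat.zero_le m) _ x0⟩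

theorem statement_6
    (φs : ∀ n, X n → X (n + 1)) (πo : ∀ n, Y → X n → X (n + 1))
    (hφc : ∀ n, Continuous (φs n)) (hφi : ∀ n, Function.Injective (φs n))
    (hπc : ∀ n, Continuous fun p : Y × X n => πo n p.1 p.2)
    (hπs : ∀ n, Function.Surjective fun p : Y × X n => πo n p.1 p.2)
    (hcomm : ∀ (n : ℕ) (y : Y) (x : X n), πo (n + 1) y (φs n x) = φs (n + 1) (πo n y x))
    (hquot : ∀ (n : ℕ) (y y' : Y) (ξ ξ' : X n), πo n y ξ = πo n y' ξ' → (y, ξ) ≠ (y', ξ') →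
      ∃ x0 x0' : X 0, ξ = phiTo X φs (Nat.zero_le n) x0 ∧ ξ' = phiTo X φs (Nat.zero_le n) x0' ∧
        πo 0 y x0 = πo 0 y' x0')
    (m : ℕ) (y : Y) (ξ : X (m + 1))
    (h : ∃ z : X (m + 1), πo (m + 1) y ξ = φs (m + 1) z) :
    ∃ w : X m, ξ = φs m w :=
  statement_6_general φs πo hπs hcomm hquot m y ξ h
end

section
/- If a similarity scheme satisfies property (P2) (whenever y_∞ ∈ Γ_n(x_n) for some x_n ∈ X_n, such x_n is unique), then the relation R (defined by y_∞ R y'_∞ iff y_∞ = y'_∞ or there exist n and x_n ∈ X_n with y_∞, y'_∞ ∈ Γ_n(x_n)) is transitive, hence an equivalence relation; moreover the induced maps φ_{∞,n}: X_n → X_∞ = Y^ℕ/R are injective. -/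
set_option linter.unusedSectionVars false
set_option linter.unusedVariables false

variable {Y : Type}

variable {X : ℕ → Type}
  [TopologicalSpace Y] [CompactSpace Y] [T2Space Y]
  [∀ n, TopologicalSpace (X n)] [∀ n, CompactSpace (X n)] [∀ n, T2Space (X n)]

/-! `Γ_n(x_n) ⊆ Γ_m(φ_{m,n} x_n)` for `n ≤ m`, so under (P2) two sets `Γ_n(x_n)` and `Γ_m(x_m)`
with `n ≤ m` that share an address are nested, with `x_m = φ_{m,n} x_n`. Hence `R` is transitive,
and `R`-related addresses of `Γ_n(x_n)`, `Γ_n(x_n')` force `φ_{m,n} x_n = φ_{m,n} x_n'`, so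
`x_n = x_n'` by injectivity of the embeddings. -/

section

-- Fresh `Y`, `X`, so that the topological instances on the ambient ones are not pulled in.
variable {Y : Type} {X : ℕ → Type} {φs : ∀ n, X n → X (n + 1)} {πo : ∀ n, Y → X n → X (n + 1)}

def PropertyP2 (X : ℕ → Type) (φs : ∀ n, X n → X (n + 1)) (πo : ∀ n, Y → X n → X (n + 1)) :
    Prop :=
  ∀ (n : ℕ) (xn xn' : X n) (y : ℕ → Y),
    y ∈ Gamma X φs πo n xn → y ∈ Gamma X φs πo n xn' → xn = xn'

lemma phiTo_trans {m n p : ℕ} (hmn : m ≤ n) (hnp : n ≤ p) (x : X m) :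
    phiTo X φs (hmn.trans hnp) x = phiTo X φs hnp (phiTo X φs hmn x) :=
  Nat.leRecOn_trans hmn hnp x

lemma phiTo_injective (hφi : ∀ n, Function.Injective (φs n)) {m n : ℕ} (h : m ≤ n) :
    Function.Injective (phiTo X φs h) := by
  induction n, h using Nat.le_induction with
  | base =>
    intro a b hab
    rwa [phiTo, phiTo, Nat.leRecOn_self, Nat.leRecOn_self] at hab
  | succ n h ih =>
    intro a b hab
    rw [phiTo, phiTo, Nat.leRecOn_succ h, Nat.leRecOn_succ h] at hab
    exact ih (hφi n hab)

lemma Gamma_subset_Gamma_phiTo {m n : ℕ} (h : m ≤ n) (xm : X m) :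
    Gamma X φs πo m xm ⊆ Gamma X φs πo n (phiTo X φs h xm) := by
  intro y hy p hnp
  obtain ⟨x0, hx0⟩ := hy p (h.trans hnp)
  exact ⟨x0, by rwa [← phiTo_trans]⟩

lemma PropertyP2.phiTo_eq {m n : ℕ} (hP2 : PropertyP2 X φs πo) (h : m ≤ n) {xm : X m} {xn : X n}
    {y : ℕ → Y} (hym : y ∈ Gamma X φs πo m xm) (hyn : y ∈ Gamma X φs πo n xn) :
    phiTo X φs h xm = xn :=
  hP2 n _ _ y (Gamma_subset_Gamma_phiTo h xm hym) hyn

lemma PropertyP2.Gamma_subset {m n : ℕ} (hP2 : PropertyP2 X φs πo) (h : m ≤ n) {xm : X m}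
    {xn : X n} {y : ℕ → Y} (hym : y ∈ Gamma X φs πo m xm) (hyn : y ∈ Gamma X φs πo n xn) :
    Gamma X φs πo m xm ⊆ Gamma X φs πo n xn :=
  hP2.phiTo_eq h hym hyn ▸ Gamma_subset_Gamma_phiTo h xm

lemma PropertyP2.simRel_trans (hP2 : PropertyP2 X φs πo) {a b c : ℕ → Y}
    (hab : simRel X φs πo a b) (hbc : simRel X φs πo b c) : simRel X φs πo a c := by
  rcases hab with rfl | ⟨m, xm, ham, hbm⟩
  · exact hbc
  rcases hbc with rfl | ⟨n, xn, hbn, hcn⟩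
  · exact Or.inr ⟨m, xm, ham, hbm⟩
  rcases le_total m n with h | h
  · exact Or.inr ⟨n, xn, hP2.Gamma_subset h hbm hbn ham, hcn⟩
  · exact Or.inr ⟨m, xm, ham, hP2.Gamma_subset h hbn hbm hcn⟩

lemma PropertyP2.simRel_equivalence (hP2 : PropertyP2 X φs πo) : Equivalence (simRel X φs πo) where
  refl _ := Or.inl rfl
  symm
    | .inl hab => .inl hab.symm
    | .inr ⟨n, xn, ha, hb⟩ => .inr ⟨n, xn, hb, ha⟩
  trans := hP2.simRel_trans

lemma PropertyP2.eq_of_simRel (hP2 : PropertyP2 X φs πo) (hφi : ∀ n, Function.Injective (φs n))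
    {n : ℕ} {xn xn' : X n} {y y' : ℕ → Y} (hy : y ∈ Gamma X φs πo n xn)
    (hy' : y' ∈ Gamma X φs πo n xn') (hyy' : simRel X φs πo y y') : xn = xn' := by
  rcases hyy' with rfl | ⟨m, xm, hym, hy'm⟩
  · exact hP2 n xn xn' y hy hy'
  rcases le_total n m with h | h
  · exact phiTo_injective hφi h <|
      (hP2.phiTo_eq h hy hym).trans (hP2.phiTo_eq h hy' hy'm).symm
  · exact (hP2.phiTo_eq h hym hy).symm.trans (hP2.phiTo_eq h hy'm hy')

end

theorem statement_10_general
    (φs : ∀ n, X n → X (n + 1)) (πo : ∀ n, Y → X n → X (n + 1))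
    (hφi : ∀ n, Function.Injective (φs n))
    (hP2 : ∀ (n : ℕ) (xn xn' : X n) (y : ℕ → Y),
      y ∈ Gamma X φs πo n xn → y ∈ Gamma X φs πo n xn' → xn = xn') :
    Equivalence (simRel X φs πo) ∧
    ∀ (n : ℕ) (xn xn' : X n) (y y' : ℕ → Y),
      y ∈ Gamma X φs πo n xn → y' ∈ Gamma X φs πo n xn' →
      Quot.mk (simRel X φs πo) y = Quot.mk (simRel X φs πo) y' → xn = xn' := by
  have hP2 : PropertyP2 X φs πo := hP2
  refine ⟨hP2.simRel_equivalence, fun n xn xn' y y' hy hy' hq => ?_⟩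
  have hyy' : simRel X φs πo y y' :=
    hP2.simRel_equivalence.eqvGen_iff.mp (Quot.eqvGen_exact hq)
  exact hP2.eq_of_simRel hφi hy hy' hyy'

theorem statement_10
    (φs : ∀ n, X n → X (n + 1)) (πo : ∀ n, Y → X n → X (n + 1))
    (hφc : ∀ n, Continuous (φs n)) (hφi : ∀ n, Function.Injective (φs n))
    (hπc : ∀ n, Continuous fun p : Y × X n => πo n p.1 p.2)
    (hπs : ∀ n, Function.Surjective fun p : Y × X n => πo n p.1 p.2)
    (hcomm : ∀ (n : ℕ) (y : Y) (x : X n), πo (n + 1) y (φs n x) = φs (n + 1) (πo n y x))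
    (hquot : ∀ (n : ℕ) (y y' : Y) (ξ ξ' : X n), πo n y ξ = πo n y' ξ' → (y, ξ) ≠ (y', ξ') →
      ∃ x0 x0' : X 0, ξ = phiTo X φs (Nat.zero_le n) x0 ∧ ξ' = phiTo X φs (Nat.zero_le n) x0' ∧
        πo 0 y x0 = πo 0 y' x0')
    (hP2 : ∀ (n : ℕ) (xn xn' : X n) (y : ℕ → Y),
      y ∈ Gamma X φs πo n xn → y ∈ Gamma X φs πo n xn' → xn = xn') :
    Equivalence (simRel X φs πo) ∧
    ∀ (n : ℕ) (xn xn' : X n) (y y' : ℕ → Y),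
      y ∈ Gamma X φs πo n xn → y' ∈ Gamma X φs πo n xn' →
      Quot.mk (simRel X φs πo) y = Quot.mk (simRel X φs πo) y' → xn = xn' :=
  statement_10_general φs πo hφi hP2
end

section
/- A discrete similarity scheme is fully injective: if for some n ≥ 0, x_n, x_n' ∈ X_n and y_∞ ∈ Y^ℕ one has y_∞ ∈ Γ_n(x_n) ∩ Γ_n(x_n'), then x_n = x_n'. -/
set_option linter.unusedSectionVars false
set_option linter.unusedVariables false

variable {Y : Type}

variable {X : ℕ → Type}
  [TopologicalSpace Y] [CompactSpace Y] [T2Space Y]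
  [∀ n, TopologicalSpace (X n)] [∀ n, CompactSpace (X n)] [∀ n, T2Space (X n)]

/-! In a discrete scheme every cell `C(y₁,…,y_{m+1}) ⊂ X (m+1)` meets `φ(X m)` in at most one
point: a point of the cell lying in `φ(X m)` comes from a point of `C(y₂,…,y_{m+1})` lying in
`φ(X (m-1))`, since `π` only glues points coming from `X 0`; so induction reduces the claim to the
discreteness of the first level. If `y ∈ Γ_n(x) ∩ Γ_n(x')`, then `φ(x)` and `φ(x')` lie in the
same cell `C(y₁,…,y_{n+1})`, hence coincide, and `φ` is injective. -/

theorem phiTo_le_succ {X : ℕ → Type} (φs : ∀ n, X n → X (n + 1)) (n : ℕ) (x : X n) :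
    phiTo X φs (Nat.le_succ n) x = φs n x := by
  rw [phiTo, Nat.leRecOn_succ le_rfl, Nat.leRecOn_self]

theorem phiTo_zero_le_succ {X : ℕ → Type} (φs : ∀ n, X n → X (n + 1)) (m : ℕ) (x : X 0) :
    phiTo X φs (Nat.zero_le (m + 1)) x = φs m (phiTo X φs (Nat.zero_le m) x) :=
  Nat.leRecOn_succ (Nat.zero_le m) x

theorem mem_range_of_proj_mem_range {Y : Type} {X : ℕ → Type}
    (φs : ∀ n, X n → X (n + 1)) (πo : ∀ n, Y → X n → X (n + 1))
    (hπs : ∀ n, Function.Surjective fun p : Y × X n => πo n p.1 p.2)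
    (hcomm : ∀ (n : ℕ) (y : Y) (x : X n), πo (n + 1) y (φs n x) = φs (n + 1) (πo n y x))
    (hquot : ∀ (n : ℕ) (y y' : Y) (ξ ξ' : X n), πo n y ξ = πo n y' ξ' → (y, ξ) ≠ (y', ξ') →
      ∃ x0 x0' : X 0, ξ = phiTo X φs (Nat.zero_le n) x0 ∧ ξ' = phiTo X φs (Nat.zero_le n) x0' ∧
        πo 0 y x0 = πo 0 y' x0')
    {m : ℕ} {c : Y} {w : X (m + 1)} (hw : πo (m + 1) c w ∈ Set.range (φs (m + 1))) :
    w ∈ Set.range (φs m) := by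
  obtain ⟨u, hu⟩ := hw
  obtain ⟨⟨c', ξ⟩, rfl⟩ := hπs m u
  have hglued : πo (m + 1) c w = πo (m + 1) c' (φs m ξ) := by rw [← hu, hcomm]
  by_cases hsame : (c, w) = (c', φs m ξ)
  · exact ⟨ξ, (congrArg Prod.snd hsame).symm⟩
  · obtain ⟨x0, -, rfl, -, -⟩ := hquot (m + 1) c c' w (φs m ξ) hglued hsame
    exact ⟨_, (phiTo_zero_le_succ φs m x0).symm⟩

theorem piFin0_eq_of_mem_range {Y : Type} {X : ℕ → Type}
    (φs : ∀ n, X n → X (n + 1)) (πo : ∀ n, Y → X n → X (n + 1))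
    (hπs : ∀ n, Function.Surjective fun p : Y × X n => πo n p.1 p.2)
    (hcomm : ∀ (n : ℕ) (y : Y) (x : X n), πo (n + 1) y (φs n x) = φs (n + 1) (πo n y x))
    (hquot : ∀ (n : ℕ) (y y' : Y) (ξ ξ' : X n), πo n y ξ = πo n y' ξ' → (y, ξ) ≠ (y', ξ') →
      ∃ x0 x0' : X 0, ξ = phiTo X φs (Nat.zero_le n) x0 ∧ ξ' = phiTo X φs (Nat.zero_le n) x0' ∧
        πo 0 y x0 = πo 0 y' x0')
    (hdisc : ∀ (y : Y) (x0 x0' : X 0),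
      (∃ z : X 0, πo 0 y x0 = φs 0 z) → (∃ z' : X 0, πo 0 y x0' = φs 0 z') →
      πo 0 y x0 = πo 0 y x0') :
    ∀ {m : ℕ} {y : Fin (m + 1) → Y} {a b : X 0},
      piFin0 X πo (m + 1) y a ∈ Set.range (φs m) →
      piFin0 X πo (m + 1) y b ∈ Set.range (φs m) →
      piFin0 X πo (m + 1) y a = piFin0 X πo (m + 1) y b
  | 0, y, a, b, ⟨u, hu⟩, ⟨v, hv⟩ => hdisc (y 0) a b ⟨u, hu.symm⟩ ⟨v, hv.symm⟩
  | m + 1, y, a, b, ha, hb => by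
    have htail := piFin0_eq_of_mem_range φs πo hπs hcomm hquot hdisc
      (mem_range_of_proj_mem_range φs πo hπs hcomm hquot ha)
      (mem_range_of_proj_mem_range φs πo hπs hcomm hquot hb)
    exact congrArg (πo (m + 1) (y 0)) htail

theorem statement_13_general
    (φs : ∀ n, X n → X (n + 1)) (πo : ∀ n, Y → X n → X (n + 1))
    (hφi : ∀ n, Function.Injective (φs n))
    (hπs : ∀ n, Function.Surjective fun p : Y × X n => πo n p.1 p.2)
    (hcomm : ∀ (n : ℕ) (y : Y) (x : X n), πo (n + 1) y (φs n x) = φs (n + 1) (πo n y x))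
    (hquot : ∀ (n : ℕ) (y y' : Y) (ξ ξ' : X n), πo n y ξ = πo n y' ξ' → (y, ξ) ≠ (y', ξ') →
      ∃ x0 x0' : X 0, ξ = phiTo X φs (Nat.zero_le n) x0 ∧ ξ' = phiTo X φs (Nat.zero_le n) x0' ∧
        πo 0 y x0 = πo 0 y' x0')
    (hdisc : ∀ (y : Y) (x0 x0' : X 0),
      (∃ z : X 0, πo 0 y x0 = φs 0 z) → (∃ z' : X 0, πo 0 y x0' = φs 0 z') →
      πo 0 y x0 = πo 0 y x0')
    (n : ℕ) (xn xn' : X n) (y : ℕ → Y)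
    (h : y ∈ Gamma X φs πo n xn) (h' : y ∈ Gamma X φs πo n xn') :
    xn = xn' := by
  obtain ⟨x0, hx0⟩ := h (n + 1) (Nat.le_succ n)
  obtain ⟨x0', hx0'⟩ := h' (n + 1) (Nat.le_succ n)
  rw [phiTo_le_succ] at hx0 hx0'
  apply hφi n
  rw [hx0, hx0']
  exact piFin0_eq_of_mem_range φs πo hπs hcomm hquot hdisc ⟨xn, hx0⟩ ⟨xn', hx0'⟩

theorem statement_13
    (φs : ∀ n, X n → X (n + 1)) (πo : ∀ n, Y → X n → X (n + 1))
    (hφc : ∀ n, Continuous (φs n)) (hφi : ∀ n, Function.Injective (φs n))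
    (hπc : ∀ n, Continuous fun p : Y × X n => πo n p.1 p.2)
    (hπs : ∀ n, Function.Surjective fun p : Y × X n => πo n p.1 p.2)
    (hcomm : ∀ (n : ℕ) (y : Y) (x : X n), πo (n + 1) y (φs n x) = φs (n + 1) (πo n y x))
    (hquot : ∀ (n : ℕ) (y y' : Y) (ξ ξ' : X n), πo n y ξ = πo n y' ξ' → (y, ξ) ≠ (y', ξ') →
      ∃ x0 x0' : X 0, ξ = phiTo X φs (Nat.zero_le n) x0 ∧ ξ' = phiTo X φs (Nat.zero_le n) x0' ∧
        πo 0 y x0 = πo 0 y' x0')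
    (hdisc : ∀ (y : Y) (x0 x0' : X 0),
      (∃ z : X 0, πo 0 y x0 = φs 0 z) → (∃ z' : X 0, πo 0 y x0' = φs 0 z') →
      πo 0 y x0 = πo 0 y x0')
    (n : ℕ) (xn xn' : X n) (y : ℕ → Y)
    (h : y ∈ Gamma X φs πo n xn) (h' : y ∈ Gamma X φs πo n xn') :
    xn = xn' :=
  statement_13_general φs πo hφi hπs hcomm hquot hdisc n xn xn' y h h'
end

section
/- Let {K; f₁,…,f_N} be a self-similar structure (each f_i: K → K injective continuous, with continuous surjection π_K: {1,…,N}^ℕ → K satisfying π_K ∘ W_k = f_k ∘ π_K), and suppose x ∈ K and I ∈ {1,…,N}^k satisfy f_I(x) ∈ X₀, where X₀ ⊂ K is a compact set containing the essential part S = {x : ∃ x', i ≠ j, f_i(x) = f_j(x')} and satisfying X₀ ⊂ ⋃_j f_j(X₀). Then x ∈ X₀. -/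
namespace SelfSimilar

variable {ι α : Type*}

def essentialPart (f : ι → α → α) : Set α :=
  {x | ∃ (x' : α) (i j : ι), i ≠ j ∧ f i x = f j x'}

variable {f : ι → α → α} {X : Set α}

theorem mem_of_apply_mem (hf : ∀ i, Function.Injective (f i)) (hS : essentialPart f ⊆ X)
    (hX : X ⊆ ⋃ j, f j '' X) {i : ι} {x : α} (hx : f i x ∈ X) : x ∈ X := by
  obtain ⟨_, ⟨j, rfl⟩, x', hx', hfx⟩ := hX hx
  by_cases hij : i = j
  · subst hij
    exact hf i hfx ▸ hx'
  · exact hS ⟨x', i, j, hij, hfx.symm⟩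

theorem mem_of_foldr_mem (hf : ∀ i, Function.Injective (f i)) (hS : essentialPart f ⊆ X)
    (hX : X ⊆ ⋃ j, f j '' X) {x : α} (w : List ι) (hx : w.foldr f x ∈ X) : x ∈ X := by
  induction w with
  | nil => exact hx
  | cons i w ih => exact ih (mem_of_apply_mem hf hS hX hx)

end SelfSimilar

theorem statement_19_general {K : Type} (N : ℕ)
    (f : Fin N → K → K) (hfi : ∀ i, Function.Injective (f i))
    (X₀ : Set K)
    (hS : {x : K | ∃ (x' : K) (i j : Fin N), i ≠ j ∧ f i x = f j x'} ⊆ X₀)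
    (hsub : X₀ ⊆ ⋃ j, f j '' X₀)
    (x : K) (w : List (Fin N)) (hx : w.foldr (fun i a => f i a) x ∈ X₀) :
    x ∈ X₀ :=
  SelfSimilar.mem_of_foldr_mem hfi hS hsub w hx

/-- Let {K; f₁,…,f_N} be a self-similar structure and X₀ ⊂ K a compact set containing the
essential part S and satisfying X₀ ⊆ ⋃ⱼ fⱼ(X₀). If f_I(x) ∈ X₀ for a finite word I, then
x ∈ X₀. Here f_I, for I = (i₁,…,i_k), is the composition f_{i₁} ∘ … ∘ f_{i_k}. -/
theorem statement_19 {K : Type} [TopologicalSpace K] [CompactSpace K] [T2Space K] (N : ℕ)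
    (f : Fin N → K → K) (hfc : ∀ i, Continuous (f i)) (hfi : ∀ i, Function.Injective (f i))
    (πK : (ℕ → Fin N) → K) (hπc : Continuous πK) (hπs : Function.Surjective πK)
    (hshift : ∀ (k : Fin N) (I : ℕ → Fin N),
      πK (fun i => match i with | 0 => k | Nat.succ j => I j) = f k (πK I))
    (X₀ : Set K) (hne : X₀.Nonempty) (hcomp : IsCompact X₀)
    (hS : {x : K | ∃ (x' : K) (i j : Fin N), i ≠ j ∧ f i x = f j x'} ⊆ X₀)
    (hsub : X₀ ⊆ ⋃ j, f j '' X₀)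
    (x : K) (w : List (Fin N)) (hx : w.foldr (fun i a => f i a) x ∈ X₀) :
    x ∈ X₀ :=
  statement_19_general N f hfi X₀ hS hsub x w hx
end
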